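/- Consider the system with α₁ = α₂. Then the transition map through the chart satisfies: a solution starting at (a, r, ε) = (a*, δ, ε*) with 0 < ε* ≤ μ of the system a' = -2a + εa, r' = -rε, ε' = 2ε² reaches ε = μ at a point whose a-coordinate has absolute value at most |a*|·exp(-2T)·(μ/ε*)^{1/2}, where T = (1/2)(1/ε* - 1/μ). -/

import Mathlib

/-!
Along the flow, ε solves the Riccati equation ε' = 2ε², so 1/ε + 2t is conserved and the time to
go from ε* to μ is exactly T = (1/2)(1/ε* - 1/μ). Moreover a²·e^{4t}/ε is conserved, which gives
a(T)² = a*²·e^{-4T}·μ/ε*; the bound (in fact an equality) follows by taking square roots.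
-/

open Set Real

lemma eq_of_hasDerivAt_zero_Icc {f : ℝ → ℝ} {a b : ℝ} (hab : a ≤ b)
    (hf : ∀ t ∈ Icc a b, HasDerivAt f 0 t) : f b = f a :=
  constant_of_has_deriv_right_zero (fun t ht => (hf t ht).continuousAt.continuousWithinAt)
    (fun t ht => (hf t (Ico_subset_Icc_self ht)).hasDerivWithinAt) b ⟨hab, le_rfl⟩

lemma monotoneOn_Icc_of_hasDerivAt_nonneg {f f' : ℝ → ℝ} {a b : ℝ}
    (hf : ∀ t ∈ Icc a b, HasDerivAt f (f' t) t) (hf' : ∀ t ∈ Icc a b, 0 ≤ f' t) :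
    MonotoneOn f (Icc a b) :=
  monotoneOn_of_hasDerivWithinAt_nonneg (convex_Icc a b)
    (fun t ht => (hf t ht).continuousAt.continuousWithinAt)
    (fun t ht => (hf t (interior_subset ht)).hasDerivWithinAt)
    (fun t ht => hf' t (interior_subset ht))

lemma hasDerivAt_inv_add_mul_of_hasDerivAt_mul_sq {ε : ℝ → ℝ} {c t : ℝ}
    (hε : HasDerivAt ε (c * ε t ^ 2) t) (hεt : ε t ≠ 0) :
    HasDerivAt (fun s => (ε s)⁻¹ + c * s) 0 t := by
  refine ((hε.inv hεt).add ((hasDerivAt_id t).const_mul c)).congr_deriv ?_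
  field_simp
  ring

lemma hasDerivAt_sq_div_mul_exp {a ε : ℝ → ℝ} {k t : ℝ}
    (ha : HasDerivAt a (-k * a t + ε t * a t) t) (hε : HasDerivAt ε (2 * ε t ^ 2) t)
    (hεt : ε t ≠ 0) :
    HasDerivAt (fun s => a s ^ 2 / ε s * exp (2 * k * s)) 0 t := by
  have hexp : HasDerivAt (fun s => exp (2 * k * s)) (exp (2 * k * t) * (2 * k)) t := by
    simpa using ((hasDerivAt_id t).const_mul (2 * k)).exp
  refine (((ha.pow 2).div hε hεt).mul hexp).congr_deriv ?_
  simp only [Pi.pow_apply, Pi.div_apply]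
  field_simp
  ring

theorem stmt_15_general (a ε : ℝ → ℝ) (astar εstar μ T' : ℝ)
    (h0 : 0 < εstar) (hT' : 0 ≤ T')
    (ha : ∀ t ∈ Set.Icc 0 T', HasDerivAt a (-2 * a t + ε t * a t) t)
    (hε : ∀ t ∈ Set.Icc 0 T', HasDerivAt ε (2 * (ε t) ^ 2) t)
    (ha0 : a 0 = astar) (hε0 : ε 0 = εstar) (hεT : ε T' = μ) :
    |a T'| ≤ |astar| * Real.exp (-2 * ((1 / 2) * (1 / εstar - 1 / μ))) *
      Real.sqrt (μ / εstar) := by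
  have hεpos : ∀ t ∈ Icc 0 T', 0 < ε t := fun t ht =>
    (hε0 ▸ h0).trans_le (monotoneOn_Icc_of_hasDerivAt_nonneg hε (fun t _ => by positivity)
      (left_mem_Icc.2 hT') ht ht.1)
  have hμ : 0 < μ := hεT ▸ hεpos T' (right_mem_Icc.2 hT')
  have hT : T' = 1 / 2 * (1 / εstar - 1 / μ) := by
    have h := eq_of_hasDerivAt_zero_Icc hT' fun t ht =>
      hasDerivAt_inv_add_mul_of_hasDerivAt_mul_sq (hε t ht) (hεpos t ht).ne'
    simp only [hε0, hεT, mul_zero, add_zero] at h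
    field_simp at h ⊢
    linarith
  have hsq : a T' ^ 2 = (|astar| * exp (-2 * T')) ^ 2 * (μ / εstar) := by
    have h := eq_of_hasDerivAt_zero_Icc hT' fun t ht =>
      hasDerivAt_sq_div_mul_exp (ha t ht) (hε t ht) (hεpos t ht).ne'
    simp only [ha0, hε0, hεT, mul_zero, exp_zero, mul_one] at h
    have hexp : exp (-2 * T') ^ 2 * exp (2 * 2 * T') = 1 := by
      rw [← exp_nat_mul, ← exp_add, ← exp_zero]
      ring_nf
    rw [mul_pow, sq_abs]
    set E := exp (-2 * T')
    set F := exp (2 * 2 * T')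
    field_simp at h ⊢
    linear_combination E ^ 2 * h - a T' ^ 2 * εstar * hexp
  rw [← sqrt_sq_eq_abs, hsq, sqrt_mul (sq_nonneg _), sqrt_sq (by positivity), hT]

/-- For a' = -2a + εa, r' = -rε, ε' = 2ε², a solution starting at (a*, δ, ε*) with
0 < ε* ≤ μ reaching ε = μ at time T' has
|a(T')| ≤ |a*|·exp(-2T)·(μ/ε*)^{1/2}, with T = (1/2)(1/ε* - 1/μ). -/
theorem stmt_15 (a r ε : ℝ → ℝ) (astar δ εstar μ T' : ℝ)
    (hδ : 0 < δ) (h0 : 0 < εstar) (hμ : εstar ≤ μ) (hT' : 0 ≤ T')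
    (ha : ∀ t ∈ Set.Icc 0 T', HasDerivAt a (-2 * a t + ε t * a t) t)
    (hr : ∀ t ∈ Set.Icc 0 T', HasDerivAt r (-(r t) * ε t) t)
    (hε : ∀ t ∈ Set.Icc 0 T', HasDerivAt ε (2 * (ε t) ^ 2) t)
    (ha0 : a 0 = astar) (hr0 : r 0 = δ) (hε0 : ε 0 = εstar) (hεT : ε T' = μ) :
    |a T'| ≤ |astar| * Real.exp (-2 * ((1 / 2) * (1 / εstar - 1 / μ))) *
      Real.sqrt (μ / εstar) :=
  stmt_15_general a ε astar εstar μ T' h0 hT' ha hε ha0 hε0 hεT
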